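/- arXiv:2308.16674 — 2 statements merged into one kernel-verified Lean document; each statement's English description precedes it below -/
import Mathlib

section
/- (Beurling–Lax–Halmos for a pure isometry) Let V be a pure isometry on a Hilbert space H and let M be a closed subspace of H. Then M is invariant under V if and only if there exist a Hilbert space structure on W' = M ⊖ V(M) and an isometry Φ : ⊕_{n≥0} copies-of-W' → H intertwining the shift with V such that M = range Φ. Concretely, M = closure of span{Vⁿ w : n ≥ 0, w ∈ W'} and the subspaces Vⁿ(W') (n ≥ 0) are pairwise orthogonal. -/
open scoped InnerProductSpace
open Filter Topology

/-! Let `V(M) ⊆ M`. If `x ∈ M` is orthogonal to every `Vⁿ(W')`, write `x = Vⁿ u` with `u ∈ M`.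
Since `Vⁿ` preserves inner products, `u ⊥ W' = M ⊖ V(M)`, and as `V(M)` is closed (an isometric
image of a closed subspace) this forces `u ∈ V(M)`, i.e. `x ∈ range Vⁿ⁺¹`. So `x` lies in every
`range Vⁿ`, where `Vⁿ Vⁿ*` acts as the identity, and purity gives `x = 0`. Orthogonality of the
`Vⁿ(W')` holds because `W' ⊥ V(M) ⊇ Vᵐ⁻ᵏ(M)` for `k < m`. -/

namespace Submodule

variable {𝕜 E : Type*} [RCLike 𝕜] [NormedAddCommGroup E] [InnerProductSpace 𝕜 E]

theorem inf_orthogonal_inf_orthogonal_le {K M : Submodule 𝕜 E} [K.HasOrthogonalProjection]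
    (hKM : K ≤ M) : M ⊓ (M ⊓ Kᗮ)ᗮ ≤ K := by
  rintro u ⟨huM, hu⟩
  rw [← sup_orthogonal_inf_of_hasOrthogonalProjection hKM] at huM
  obtain ⟨k, hk, r, hr, rfl⟩ := mem_sup.mp huM
  have hk' : k ∈ (M ⊓ Kᗮ)ᗮ := orthogonal_le inf_le_right (le_orthogonal_orthogonal K hk)
  have hr' : r ∈ (M ⊓ Kᗮ)ᗮ := by simpa using sub_mem hu hk'
  have hr0 : r = 0 := by
    rw [← mem_bot 𝕜, ← inf_orthogonal_eq_bot (M ⊓ Kᗮ)]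
    exact ⟨⟨hr.2, hr.1⟩, hr'⟩
  simpa [hr0] using hk

end Submodule

namespace ContinuousLinearMap

section TopologicalModule

variable {R E : Type*} [Semiring R] [TopologicalSpace E] [AddCommMonoid E] [Module R E]
  {V : E →L[R] E}

theorem pow_apply_mem {M : Submodule R E} (hinv : ∀ x ∈ M, V x ∈ M) (n : ℕ) {x : E}
    (hx : x ∈ M) : (V ^ n) x ∈ M := by
  induction n with
  | zero => simpa using hx
  | succ n ih => rw [pow_succ', mul_apply_eq_comp]; exact hinv _ ih

theorem apply_mem_topologicalClosure_iSup_map_pow [ContinuousAdd E] [ContinuousConstSMul R E]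
    {W : Submodule R E} {x : E}
    (hx : x ∈ (⨆ n : ℕ, W.map ((V ^ n : E →L[R] E) : E →ₗ[R] E)).topologicalClosure) :
    V x ∈ (⨆ n : ℕ, W.map ((V ^ n : E →L[R] E) : E →ₗ[R] E)).topologicalClosure := by
  set N := ⨆ n : ℕ, W.map ((V ^ n : E →L[R] E) : E →ₗ[R] E)
  have hN : N ≤ N.topologicalClosure.comap (V : E →ₗ[R] E) := by
    refine iSup_le fun n => ?_
    rintro _ ⟨w, hw, rfl⟩
    refine N.le_topologicalClosure (Submodule.mem_iSup_of_mem (n + 1) ⟨w, hw, ?_⟩)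
    rw [pow_succ']; rfl
  exact N.topologicalClosure_minimal hN
    (N.isClosed_topologicalClosure.preimage V.continuous) hx

end TopologicalModule

section InnerProductSpace

variable {𝕜 E : Type*} [RCLike 𝕜] [NormedAddCommGroup E] [InnerProductSpace 𝕜 E]
  {V : E →L[𝕜] E} {M : Submodule 𝕜 E}

def wanderingSubspace (V : E →L[𝕜] E) (M : Submodule 𝕜 E) : Submodule 𝕜 E :=
  M ⊓ (M.map (V : E →ₗ[𝕜] E))ᗮ

theorem norm_pow_apply (hV : ∀ x, ‖V x‖ = ‖x‖) (n : ℕ) (x : E) : ‖(V ^ n) x‖ = ‖x‖ := by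
  induction n with
  | zero => simp
  | succ n ih => rw [pow_succ', mul_apply_eq_comp, hV, ih]

theorem inner_pow_apply_pow_apply (hV : ∀ x, ‖V x‖ = ‖x‖) (n : ℕ) (x y : E) :
    ⟪(V ^ n) x, (V ^ n) y⟫_𝕜 = ⟪x, y⟫_𝕜 :=
  (LinearMap.norm_map_iff_inner_map_map (V ^ n)).mp (norm_pow_apply hV n) x y

theorem inner_pow_apply_pow_apply_eq_zero_of_lt (hV : ∀ x, ‖V x‖ = ‖x‖)
    (hinv : ∀ x ∈ M, V x ∈ M) {k m : ℕ} (hkm : k < m) {w z : E}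
    (hw : w ∈ wanderingSubspace V M) (hz : z ∈ M) : ⟪(V ^ k) w, (V ^ m) z⟫_𝕜 = 0 := by
  obtain ⟨j, rfl⟩ := Nat.exists_eq_add_of_lt hkm
  rw [add_assoc, pow_add, mul_apply_eq_comp, inner_pow_apply_pow_apply hV, pow_succ',
    mul_apply_eq_comp]
  exact Submodule.inner_left_of_mem_orthogonal
    (Submodule.mem_map_of_mem (pow_apply_mem hinv j hz)) hw.2

theorem inner_pow_apply_pow_apply_wanderingSubspace_eq_zero (hV : ∀ x, ‖V x‖ = ‖x‖)
    (hinv : ∀ x ∈ M, V x ∈ M) {n m : ℕ} (hnm : n ≠ m) {w w' : E}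
    (hw : w ∈ wanderingSubspace V M) (hw' : w' ∈ wanderingSubspace V M) :
    ⟪(V ^ n) w, (V ^ m) w'⟫_𝕜 = 0 := by
  rcases hnm.lt_or_gt with h | h
  · exact inner_pow_apply_pow_apply_eq_zero_of_lt hV hinv h hw hw'.1
  · rw [inner_eq_zero_symm]
    exact inner_pow_apply_pow_apply_eq_zero_of_lt hV hinv h hw' hw.1

theorem topologicalClosure_iSup_map_pow_wanderingSubspace_le (hM : IsClosed (M : Set E))
    (hinv : ∀ x ∈ M, V x ∈ M) :
    (⨆ n : ℕ, (wanderingSubspace V M).map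
      ((V ^ n : E →L[𝕜] E) : E →ₗ[𝕜] E)).topologicalClosure ≤ M := by
  refine Submodule.topologicalClosure_minimal _ (iSup_le fun n => ?_) hM
  rintro _ ⟨w, hw, rfl⟩
  exact pow_apply_mem hinv n hw.1

variable [CompleteSpace E]

theorem adjoint_pow_apply_pow_apply (hV : ∀ x, ‖V x‖ = ‖x‖) (n : ℕ) (x : E) :
    (adjoint V ^ n) ((V ^ n) x) = x := by
  have h := (norm_map_iff_adjoint_comp_self (V ^ n)).mp (norm_pow_apply hV n)
  rw [← star_eq_adjoint, ← star_pow, star_eq_adjoint, ← comp_apply, h, one_apply_eq_self]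

theorem eq_zero_of_forall_mem_range_pow (hV : ∀ x, ‖V x‖ = ‖x‖)
    (hpure : ∀ x : E, Tendsto (fun n : ℕ => (V ^ n) ((adjoint V ^ n) x)) atTop (𝓝 0))
    {x : E} (hx : ∀ n, x ∈ Set.range ⇑(V ^ n)) : x = 0 := by
  have hconst : (fun n : ℕ => (V ^ n) ((adjoint V ^ n) x)) = fun _ => x := by
    funext n
    obtain ⟨u, rfl⟩ := hx n
    rw [adjoint_pow_apply_pow_apply hV]
  exact tendsto_nhds_unique tendsto_const_nhds (hconst ▸ hpure x)

theorem mem_map_of_mem_orthogonal_wanderingSubspace (hV : ∀ x, ‖V x‖ = ‖x‖)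
    (hM : IsClosed (M : Set E)) (hinv : ∀ x ∈ M, V x ∈ M) {u : E} (huM : u ∈ M)
    (hu : u ∈ (wanderingSubspace V M)ᗮ) : u ∈ M.map (V : E →ₗ[𝕜] E) := by
  have hclosed : IsClosed (M.map (V : E →ₗ[𝕜] E) : Set E) := by
    rw [Submodule.map_coe]
    exact (AddMonoidHomClass.isometry_of_norm V hV).isClosedEmbedding.isClosedMap _ hM
  have : CompleteSpace (M.map (V : E →ₗ[𝕜] E)) := hclosed.completeSpace_coe
  refine Submodule.inf_orthogonal_inf_orthogonal_le ?_ ⟨huM, hu⟩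
  rintro _ ⟨z, hz, rfl⟩
  exact hinv z hz

theorem exists_mem_pow_apply_eq_of_mem_orthogonal (hV : ∀ x, ‖V x‖ = ‖x‖)
    (hM : IsClosed (M : Set E)) (hinv : ∀ x ∈ M, V x ∈ M) {x : E} (hxM : x ∈ M)
    (hx : x ∈ (⨆ n : ℕ, (wanderingSubspace V M).map ((V ^ n : E →L[𝕜] E) : E →ₗ[𝕜] E))ᗮ)
    (n : ℕ) : ∃ u ∈ M, (V ^ n) u = x := by
  induction n with
  | zero => exact ⟨x, hxM, by simp⟩
  | succ n ih =>
    obtain ⟨u, huM, rfl⟩ := ih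
    have hu : u ∈ (wanderingSubspace V M)ᗮ := fun w hw => by
      rw [← inner_pow_apply_pow_apply hV n]
      exact hx _ (Submodule.mem_iSup_of_mem n (Submodule.mem_map_of_mem hw))
    obtain ⟨u', hu'M, rfl⟩ := mem_map_of_mem_orthogonal_wanderingSubspace hV hM hinv huM hu
    exact ⟨u', hu'M, by rw [pow_succ, mul_apply_eq_comp]; rfl⟩

theorem le_topologicalClosure_iSup_map_pow_wanderingSubspace (hV : ∀ x, ‖V x‖ = ‖x‖)
    (hpure : ∀ x : E, Tendsto (fun n : ℕ => (V ^ n) ((adjoint V ^ n) x)) atTop (𝓝 0))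
    (hM : IsClosed (M : Set E)) (hinv : ∀ x ∈ M, V x ∈ M) :
    M ≤ (⨆ n : ℕ, (wanderingSubspace V M).map
      ((V ^ n : E →L[𝕜] E) : E →ₗ[𝕜] E)).topologicalClosure := by
  set N := ⨆ n : ℕ, (wanderingSubspace V M).map ((V ^ n : E →L[𝕜] E) : E →ₗ[𝕜] E)
  rw [← Submodule.sup_orthogonal_inf_of_hasOrthogonalProjection
    (topologicalClosure_iSup_map_pow_wanderingSubspace_le hM hinv)]
  refine sup_le le_rfl fun x ⟨hx, hxM⟩ => ?_
  have hxN : x ∈ Nᗮ := Submodule.orthogonal_le N.le_topologicalClosure hx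
  have hx0 : x = 0 := eq_zero_of_forall_mem_range_pow hV hpure fun n => by
    obtain ⟨u, -, hu⟩ := exists_mem_pow_apply_eq_of_mem_orthogonal hV hM hinv hxM hxN n
    exact ⟨u, hu⟩
  rw [hx0]
  exact zero_mem _

end InnerProductSpace

end ContinuousLinearMap

/-- Beurling–Lax–Halmos for a pure isometry: a closed subspace `M` is invariant
under `V` iff `M = ⊕_{n≥0} Vⁿ(W')` where `W' = M ⊖ V(M)`. -/
theorem beurling_lax_halmos_pure_isometry
    {H : Type*} [NormedAddCommGroup H] [InnerProductSpace ℂ H] [CompleteSpace H]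
    (V : H →L[ℂ] H) (hV : ∀ x, ‖V x‖ = ‖x‖)
    (hpure : ∀ x : H, Tendsto (fun n : ℕ => (V ^ n) ((ContinuousLinearMap.adjoint V ^ n) x))
      atTop (𝓝 0))
    (M : Submodule ℂ H) (hM : IsClosed (M : Set H)) :
    let W' := M ⊓ (M.map (V : H →ₗ[ℂ] H))ᗮ
    (∀ x ∈ M, V x ∈ M) ↔
      (M = (⨆ n : ℕ, W'.map ((V ^ n : H →L[ℂ] H) : H →ₗ[ℂ] H)).topologicalClosure ∧
       ∀ n m : ℕ, n ≠ m → ∀ w ∈ W', ∀ w' ∈ W', ⟪(V ^ n) w, (V ^ m) w'⟫_ℂ = 0) := by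
  intro W'
  constructor
  · intro hinv
    exact ⟨le_antisymm
      (ContinuousLinearMap.le_topologicalClosure_iSup_map_pow_wanderingSubspace hV hpure hM hinv)
      (ContinuousLinearMap.topologicalClosure_iSup_map_pow_wanderingSubspace_le hM hinv),
      fun n m hnm w hw w' hw' =>
        ContinuousLinearMap.inner_pow_apply_pow_apply_wanderingSubspace_eq_zero hV hinv hnm hw hw'⟩
  · rintro ⟨hMeq, -⟩ x hx
    rw [hMeq] at hx ⊢
    exact ContinuousLinearMap.apply_mem_topologicalClosure_iSup_map_pow hx
end

section
/- Let V₁, V₂ be doubly commuting pure isometries on H with W = ker V₁* ∩ ker V₂*. Then ker V₁* = ⊕_{n≥0} V₂ⁿ(W); that is, the wandering subspace of V₁ decomposes as the orthogonal direct sum of the images of the joint wandering subspace under powers of V₂. -/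
open scoped InnerProductSpace
open Filter Topology

/-!
Since `V₂* V₂ = 1`, the ring identity `1 - V₂ⁿ V₂*ⁿ = ∑_{k<n} V₂ᵏ (1 - V₂ V₂*) V₂*ᵏ` writes
`x - V₂ⁿ V₂*ⁿ x` as a sum of vectors `V₂ᵏ (1 - V₂ V₂*) V₂*ᵏ x`. For `x ∈ ker V₁*` each of them lies
in `V₂ᵏ W`: `V₁*` commutes with `V₂` and `V₂*`, so `V₂*ᵏ x ∈ ker V₁*`, and `1 - V₂ V₂*` maps
`ker V₁*` into `ker V₁* ∩ ker V₂*`. Purity of `V₂` makes `x - V₂ⁿ V₂*ⁿ x → x`. Orthogonality holds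
because `⟪V₂ⁿ w, V₂ᵐ w'⟫ = ⟪w, V₂^(m-n) w'⟫` for `n < m` and `w ∈ ker V₂* ⊥ range V₂`.
-/

theorem one_sub_pow_mul_pow_eq_sum {R : Type*} [Ring R] (a b : R) (n : ℕ) :
    1 - a ^ n * b ^ n = ∑ k ∈ Finset.range n, a ^ k * (1 - a * b) * b ^ k := by
  induction n with
  | zero => simp
  | succ n ih =>
    rw [Finset.sum_range_succ, ← ih, pow_succ a, pow_succ' b]
    noncomm_ring

namespace ContinuousLinearMap

variable {𝕜 H : Type*} [RCLike 𝕜] [NormedAddCommGroup H] [InnerProductSpace 𝕜 H] [CompleteSpace H]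

theorem adjoint_mul_self_of_norm_map {V : H →L[𝕜] H} (hV : ∀ x, ‖V x‖ = ‖x‖) :
    adjoint V * V = 1 :=
  (norm_map_iff_adjoint_comp_self V).mp hV

theorem inner_apply_pow_succ_apply_eq_zero {V : H →L[𝕜] H} {w : H} (hw : adjoint V w = 0)
    (k : ℕ) (x : H) : ⟪w, (V ^ (k + 1)) x⟫_𝕜 = 0 := by
  rw [pow_succ', mul_apply_eq_comp, ← adjoint_inner_left, hw, inner_zero_left]

theorem inner_pow_apply_pow_apply_eq_zero_of_lt_s16 {V : H →L[𝕜] H} (hV : ∀ x, ‖V x‖ = ‖x‖)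
    {w : H} (hw : adjoint V w = 0) {n m : ℕ} (hnm : n < m) (w' : H) :
    ⟪(V ^ n) w, (V ^ m) w'⟫_𝕜 = 0 := by
  obtain ⟨k, rfl⟩ := Nat.exists_eq_add_of_lt hnm
  have hpow : adjoint (V ^ n) * V ^ n = 1 := by
    rw [← star_eq_adjoint, star_pow, star_eq_adjoint]
    exact pow_mul_pow_eq_one n (adjoint_mul_self_of_norm_map hV)
  rw [← adjoint_inner_right, add_assoc, pow_add, mul_apply_eq_comp,
    ← mul_apply_eq_comp (adjoint (V ^ n)), hpow, one_apply_eq_self,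
    inner_apply_pow_succ_apply_eq_zero hw]

theorem inner_pow_apply_pow_apply_eq_zero_of_ne {V : H →L[𝕜] H} (hV : ∀ x, ‖V x‖ = ‖x‖)
    {w w' : H} (hw : adjoint V w = 0) (hw' : adjoint V w' = 0) {n m : ℕ} (hnm : n ≠ m) :
    ⟪(V ^ n) w, (V ^ m) w'⟫_𝕜 = 0 := by
  rcases hnm.lt_or_gt with h | h
  · exact inner_pow_apply_pow_apply_eq_zero_of_lt_s16 hV hw h w'
  · rw [← inner_conj_symm, inner_pow_apply_pow_apply_eq_zero_of_lt_s16 hV hw' h w, map_zero]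

section DoublyCommuting

variable {V₁ V₂ : H →L[𝕜] H}

theorem sub_apply_adjoint_apply_mem_ker_inf_ker (hV₂ : ∀ x, ‖V₂ x‖ = ‖x‖)
    (hadj : Commute (adjoint V₁) (adjoint V₂)) (hdc : Commute (adjoint V₁) V₂) {y : H}
    (hy : adjoint V₁ y = 0) :
    y - V₂ (adjoint V₂ y) ∈
      LinearMap.ker (adjoint V₁ : H →ₗ[𝕜] H) ⊓ LinearMap.ker (adjoint V₂ : H →ₗ[𝕜] H) := by
  refine ⟨?_, ?_⟩
  · change adjoint V₁ (y - V₂ (adjoint V₂ y)) = 0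
    rw [map_sub, ← mul_apply_eq_comp, hdc.eq, mul_apply_eq_comp,
      ← mul_apply_eq_comp (adjoint V₁), hadj.eq, mul_apply_eq_comp, hy, map_zero, map_zero,
      sub_zero]
  · change adjoint V₂ (y - V₂ (adjoint V₂ y)) = 0
    rw [map_sub, ← mul_apply_eq_comp (adjoint V₂) V₂, adjoint_mul_self_of_norm_map hV₂,
      one_apply_eq_self, sub_self]

theorem sub_pow_apply_adjoint_pow_apply_mem_iSup (hV₂ : ∀ x, ‖V₂ x‖ = ‖x‖)
    (hadj : Commute (adjoint V₁) (adjoint V₂)) (hdc : Commute (adjoint V₁) V₂) {x : H}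
    (hx : adjoint V₁ x = 0) (n : ℕ) :
    x - (V₂ ^ n) ((adjoint V₂ ^ n) x) ∈ ⨆ k : ℕ,
      (LinearMap.ker (adjoint V₁ : H →ₗ[𝕜] H) ⊓ LinearMap.ker (adjoint V₂ : H →ₗ[𝕜] H)).map
        ((V₂ ^ k : H →L[𝕜] H) : H →ₗ[𝕜] H) := by
  have htelescope := congrArg (· x) (one_sub_pow_mul_pow_eq_sum V₂ (adjoint V₂) n)
  simp only [sub_apply, one_apply_eq_self, mul_apply_eq_comp, sum_apply] at htelescope
  rw [htelescope]
  refine Submodule.sum_mem _ fun k _ => Submodule.mem_iSup_of_mem k (Submodule.mem_map_of_mem ?_)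
  refine sub_apply_adjoint_apply_mem_ker_inf_ker hV₂ hadj hdc ?_
  rw [← mul_apply_eq_comp, (hadj.pow_right k).eq, mul_apply_eq_comp, hx, map_zero]

theorem ker_adjoint_eq_topologicalClosure_iSup_map_pow (hV₂ : ∀ x, ‖V₂ x‖ = ‖x‖)
    (hcomm : Commute V₁ V₂) (hdc : Commute (adjoint V₁) V₂)
    (hpure₂ : ∀ x, Tendsto (fun n : ℕ => (V₂ ^ n) ((adjoint V₂ ^ n) x)) atTop (𝓝 0)) :
    LinearMap.ker (adjoint V₁ : H →ₗ[𝕜] H) = (⨆ k : ℕ,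
      (LinearMap.ker (adjoint V₁ : H →ₗ[𝕜] H) ⊓ LinearMap.ker (adjoint V₂ : H →ₗ[𝕜] H)).map
        ((V₂ ^ k : H →L[𝕜] H) : H →ₗ[𝕜] H)).topologicalClosure := by
  have hadj : Commute (adjoint V₁) (adjoint V₂) := by
    simpa only [star_eq_adjoint] using hcomm.star_star
  refine le_antisymm (fun x hx => ?_)
    (Submodule.topologicalClosure_minimal _ (iSup_le fun k => ?_) (isClosed_ker _))
  · have hlim : Tendsto (fun n : ℕ => x - (V₂ ^ n) ((adjoint V₂ ^ n) x)) atTop (𝓝 x) := by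
      simpa using tendsto_const_nhds.sub (hpure₂ x)
    exact mem_closure_of_tendsto hlim
      (Eventually.of_forall (sub_pow_apply_adjoint_pow_apply_mem_iSup hV₂ hadj hdc hx))
  · rintro _ ⟨w, ⟨hw, -⟩, rfl⟩
    change adjoint V₁ ((V₂ ^ k) w) = 0
    rw [← mul_apply_eq_comp, (hdc.pow_right k).eq, mul_apply_eq_comp,
      show adjoint V₁ w = 0 from hw, map_zero]

end DoublyCommuting

end ContinuousLinearMap

theorem wandering_subspace_decomposition_doubly_commuting_general
    {H : Type*} [NormedAddCommGroup H] [InnerProductSpace ℂ H] [CompleteSpace H]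
    (V₁ V₂ : H →L[ℂ] H) (hV₂ : ∀ x, ‖V₂ x‖ = ‖x‖)
    (hcomm : V₁.comp V₂ = V₂.comp V₁)
    (hdc : (ContinuousLinearMap.adjoint V₁).comp V₂
      = V₂.comp (ContinuousLinearMap.adjoint V₁))
    (hpure₂ : ∀ x : H, Tendsto (fun n : ℕ => (V₂ ^ n) ((ContinuousLinearMap.adjoint V₂ ^ n) x))
      atTop (𝓝 0)) :
    let W := LinearMap.ker ((ContinuousLinearMap.adjoint V₁ : H →L[ℂ] H) : H →ₗ[ℂ] H) ⊓
      LinearMap.ker ((ContinuousLinearMap.adjoint V₂ : H →L[ℂ] H) : H →ₗ[ℂ] H)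
    LinearMap.ker ((ContinuousLinearMap.adjoint V₁ : H →L[ℂ] H) : H →ₗ[ℂ] H)
      = (⨆ n : ℕ, W.map ((V₂ ^ n : H →L[ℂ] H) : H →ₗ[ℂ] H)).topologicalClosure ∧
    (∀ n m : ℕ, n ≠ m → ∀ w ∈ W, ∀ w' ∈ W, ⟪(V₂ ^ n) w, (V₂ ^ m) w'⟫_ℂ = 0) :=
  ⟨ContinuousLinearMap.ker_adjoint_eq_topologicalClosure_iSup_map_pow hV₂ hcomm hdc hpure₂,
    fun _ _ hnm _ hw _ hw' =>
      ContinuousLinearMap.inner_pow_apply_pow_apply_eq_zero_of_ne hV₂ hw.2 hw'.2 hnm⟩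

/-- For doubly commuting pure isometries, the wandering subspace of `V₁`
decomposes as `ker V₁* = ⊕_{n≥0} V₂ⁿ(W)` with `W = ker V₁* ∩ ker V₂*`. -/
theorem wandering_subspace_decomposition_doubly_commuting
    {H : Type*} [NormedAddCommGroup H] [InnerProductSpace ℂ H] [CompleteSpace H]
    (V₁ V₂ : H →L[ℂ] H) (hV₁ : ∀ x, ‖V₁ x‖ = ‖x‖) (hV₂ : ∀ x, ‖V₂ x‖ = ‖x‖)
    (hcomm : V₁.comp V₂ = V₂.comp V₁)
    (hdc : (ContinuousLinearMap.adjoint V₁).comp V₂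
      = V₂.comp (ContinuousLinearMap.adjoint V₁))
    (hpure₁ : ∀ x : H, Tendsto (fun n : ℕ => (V₁ ^ n) ((ContinuousLinearMap.adjoint V₁ ^ n) x))
      atTop (𝓝 0))
    (hpure₂ : ∀ x : H, Tendsto (fun n : ℕ => (V₂ ^ n) ((ContinuousLinearMap.adjoint V₂ ^ n) x))
      atTop (𝓝 0)) :
    let W := LinearMap.ker ((ContinuousLinearMap.adjoint V₁ : H →L[ℂ] H) : H →ₗ[ℂ] H) ⊓
      LinearMap.ker ((ContinuousLinearMap.adjoint V₂ : H →L[ℂ] H) : H →ₗ[ℂ] H)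
    LinearMap.ker ((ContinuousLinearMap.adjoint V₁ : H →L[ℂ] H) : H →ₗ[ℂ] H)
      = (⨆ n : ℕ, W.map ((V₂ ^ n : H →L[ℂ] H) : H →ₗ[ℂ] H)).topologicalClosure ∧
    (∀ n m : ℕ, n ≠ m → ∀ w ∈ W, ∀ w' ∈ W, ⟪(V₂ ^ n) w, (V₂ ^ m) w'⟫_ℂ = 0) :=
  wandering_subspace_decomposition_doubly_commuting_general V₁ V₂ hV₂ hcomm hdc hpure₂
end
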